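/- Let a : ℕ → ℤ satisfy the Tribonacci recurrence a(n+3) = a(n+2) + a(n+1) + a(n) for all n. Define c₁ : ℕ → ℤ by c₁(0) = 3, c₁(1) = 1, c₁(2) = 3, c₁(n+3) = c₁(n+2) + c₁(n+1) + c₁(n), and c₂ : ℕ → ℤ by c₂(0) = −3, c₂(1) = 1, c₂(2) = 1, c₂(n+3) = −c₂(n+2) − c₂(n+1) + c₂(n). Then for all natural numbers m and n, a(m(n+3)) = c₁(m) · a(m(n+2)) + c₂(m) · a(m(n+1)) + a(mn). -/
import Mathlib

def c₁ : ℕ → ℤ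
  | 0 => 3
  | 1 => 1
  | 2 => 3
  | (n + 3) => c₁ (n + 2) + c₁ (n + 1) + c₁ n

def c₂ : ℕ → ℤ
  | 0 => -3
  | 1 => 1
  | 2 => 1
  | (n + 3) => -c₂ (n + 2) - c₂ (n + 1) + c₂ n

open Matrix

private theorem ch3' (a b c d e f g h i : ℤ) :
    let A : Matrix (Fin 3) (Fin 3) ℤ := !![a,b,c;d,e,f;g,h,i]
    A ^ 3 = A.trace • A ^ 2 - A.adjugate.trace • A + A.det • (1 : Matrix (Fin 3) (Fin 3) ℤ) := by
  intro A
  show A ^ 3 = _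
  rw [pow_succ, pow_two]
  simp only [A, trace_fin_three_of, adjugate_fin_three_of, trace_fin_three_of,
    Matrix.mul_fin_three, Matrix.one_fin_three, Matrix.smul_of]
  ext r s
  fin_cases r <;> fin_cases s <;>
    simp [Matrix.sub_apply, Matrix.add_apply, Matrix.det_fin_three, Matrix.vecHead,
      Matrix.vecTail] <;> ring

private theorem ch3 (A : Matrix (Fin 3) (Fin 3) ℤ) :
    A ^ 3 = A.trace • A ^ 2 - A.adjugate.trace • A + A.det • (1 : Matrix (Fin 3) (Fin 3) ℤ) := by
  have hA : A = !![A 0 0, A 0 1, A 0 2; A 1 0, A 1 1, A 1 2; A 2 0, A 2 1, A 2 2] := by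
    ext r s; fin_cases r <;> fin_cases s <;> rfl
  rw [hA]
  exact ch3' _ _ _ _ _ _ _ _ _

private def Mt : Matrix (Fin 3) (Fin 3) ℤ := !![1,1,1;1,0,0;0,1,0]
private def Bt : Matrix (Fin 3) (Fin 3) ℤ := !![0,1,0;0,0,1;1,-1,-1]

private theorem matEq (A B : Matrix (Fin 3) (Fin 3) ℤ)
    (h : ∀ r s : Fin 3, A r s = B r s) : A = B := by ext r s; exact h r s

private theorem hM3 : Mt ^ 3 = Mt ^ 2 + Mt + 1 := by
  apply matEq; intro r s
  fin_cases r <;> fin_cases s <;>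
    simp [Mt, pow_succ, Matrix.mul_fin_three, Matrix.one_fin_three, Matrix.add_apply, Matrix.vecHead, Matrix.vecTail] <;> ring

private theorem hBadj : Mt.adjugate = Bt := by
  apply matEq; intro r s
  fin_cases r <;> fin_cases s <;> simp [Mt, Bt, adjugate_fin_three_of]

private theorem hB3 : Bt ^ 3 = -Bt ^ 2 - Bt + 1 := by
  apply matEq; intro r s
  fin_cases r <;> fin_cases s <;>
    simp [Bt, pow_succ, Matrix.mul_fin_three, Matrix.one_fin_three, Matrix.add_apply,
      Matrix.sub_apply, Matrix.neg_apply, Matrix.vecHead, Matrix.vecTail] <;> ring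

private theorem hMdet : Mt.det = 1 := by simp [Mt, Matrix.det_fin_three, Matrix.vecHead, Matrix.vecTail]

private theorem traceM : ∀ m : ℕ, (Mt ^ m).trace = c₁ m := by
  have key : ∀ m : ℕ, Mt ^ (m + 3) = Mt ^ (m + 2) + Mt ^ (m + 1) + Mt ^ m := by
    intro m
    rw [pow_add, hM3]; noncomm_ring
  intro m
  induction m using Nat.strong_induction_on with
  | _ m ih =>
    match m with
    | 0 => simp [c₁, Matrix.trace_one]
    | 1 => simp [c₁, Mt, trace_fin_three, Matrix.vecHead, Matrix.vecTail]
    | 2 => rw [pow_two]; simp [c₁, Mt, Matrix.mul_fin_three, trace_fin_three_of, Matrix.vecHead, Matrix.vecTail]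
    | (k + 3) =>
      rw [key, Matrix.trace_add, Matrix.trace_add, ih _ (by omega), ih _ (by omega),
        ih _ (by omega)]
      rfl

private theorem traceB : ∀ m : ℕ, (Bt ^ m).trace = -c₂ m := by
  have key : ∀ m : ℕ, Bt ^ (m + 3) = -Bt ^ (m + 2) - Bt ^ (m + 1) + Bt ^ m := by
    intro m
    rw [pow_add, hB3]; noncomm_ring
  intro m
  induction m using Nat.strong_induction_on with
  | _ m ih =>
    match m with
    | 0 => simp [c₂, Matrix.trace_one]
    | 1 => simp [c₂, Bt, trace_fin_three, Matrix.vecHead, Matrix.vecTail]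
    | 2 => rw [pow_two]; simp [c₂, Bt, Matrix.mul_fin_three, trace_fin_three_of, Matrix.vecHead, Matrix.vecTail]
    | (k + 3) =>
      rw [key, Matrix.trace_add, Matrix.trace_sub, Matrix.trace_neg, ih _ (by omega),
        ih _ (by omega), ih _ (by omega)]
      show -(-c₂ (k + 2)) - -c₂ (k + 1) + -c₂ k = -c₂ (k + 3)
      rw [show c₂ (k + 3) = -c₂ (k + 2) - c₂ (k + 1) + c₂ k from rfl]
      ring

private theorem matKey (m : ℕ) :
    Mt ^ (3 * m) = c₁ m • Mt ^ (2 * m) + c₂ m • Mt ^ m + 1 := by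
  have h := ch3 (Mt ^ m)
  rw [← pow_mul, ← pow_mul, mul_comm m 3, mul_comm m 2] at h
  rw [h, traceM, Matrix.det_pow, hMdet, Matrix.adjugate_pow, hBadj, traceB, one_pow]
  rw [neg_smul, sub_neg_eq_add, one_smul]

theorem tribonacci_msection_recurrence
    (a : ℕ → ℤ) (ha : ∀ n : ℕ, a (n + 3) = a (n + 2) + a (n + 1) + a n) :
    ∀ m n : ℕ, a (m * (n + 3)) =
      c₁ m * a (m * (n + 2)) + c₂ m * a (m * (n + 1)) + a (m * n) := by
  intro m n
  set w : ℕ → Fin 3 → ℤ := fun k => ![a (k + 2), a (k + 1), a k] with hw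
  have hstep : ∀ k : ℕ, Mt *ᵥ w k = w (k + 1) := by
    intro k
    funext s
    fin_cases s <;>
      simp [Mt, hw, Matrix.mulVec, dotProduct, Fin.sum_univ_three, ha k] <;> ring
  have hpow : ∀ j k : ℕ, (Mt ^ j) *ᵥ w k = w (k + j) := by
    intro j
    induction j with
    | zero => intro k; simp
    | succ j ihj =>
      intro k
      rw [pow_succ', ← Matrix.mulVec_mulVec, ihj, hstep, Nat.add_assoc]
  have key := matKey m
  have h2 := congrArg (fun (A : Matrix (Fin 3) (Fin 3) ℤ) => (A *ᵥ w (m * n)) 2) key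
  simp only [Matrix.add_mulVec, Matrix.smul_mulVec, Matrix.one_mulVec, hpow,
    Pi.add_apply, Pi.smul_apply, smul_eq_mul] at h2
  have e1 : m * (n + 3) = m * n + 3 * m := by ring
  have e2 : m * (n + 2) = m * n + 2 * m := by ring
  have e3 : m * (n + 1) = m * n + m := by ring
  rw [e1, e2, e3]
  have hw2 : ∀ k, w k 2 = a k := fun k => rfl
  rw [← hw2, ← hw2, ← hw2, ← hw2]
  exact h2
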